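/- For every real m ≥ 2 and all real parameters α, θ with 0 ≤ α < 1 and θ > −α, there exists a constant C = C(α, θ, m) < ∞ such that for every integer K ≥ 2 and every z ∈ ∇_K, |B_K φ_m(z)| ≤ C. -/

import Mathlib

open Finset

/-- The function `r(u)`: `r(u) = (1-u)(1-(1-u)^K)/u` for `u > 0`, `r(0) = K`. -/
noncomputable def rfun (K : ℕ) (u : ℝ) : ℝ :=
  if u = 0 then (K : ℝ) else (1 - u) * (1 - (1 - u) ^ K) / u

/-- The simplex `Δ_K`. -/
def DeltaK (K : ℕ) : Set (Fin K → ℝ) :=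
  {z | (∀ i, 0 ≤ z i) ∧ ∑ i, z i = 1}

/-- The ordered simplex `∇_K`. -/
def NablaK (K : ℕ) : Set (Fin K → ℝ) :=
  {z | z ∈ DeltaK K ∧ ∀ i j : Fin K, i ≤ j → z j ≤ z i}

/-- The mainland frequencies `p_i(z)`. -/
noncomputable def pfun (K : ℕ) (z : Fin K → ℝ) (i : Fin K) : ℝ :=
  (1 - z i) ^ K / ∑ l, (1 - z l) ^ K

/-- The drift coefficients `b_i(z)`. -/
noncomputable def bdrift (K : ℕ) (α θ : ℝ) (z : Fin K → ℝ) (i : Fin K) : ℝ :=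
  (1 / 2) * ((θ + α) * (1 - z i) / ((K : ℝ) - 1) - (θ + α) * z i
    + α * pfun K z i * (∑ j, z j * rfun K (z j)) - α * z i * rfun K (z i))

/-- The power sum `φ_m(z) = ∑_{i=1}^K z_i^m` (real exponent). -/
noncomputable def phiK (K : ℕ) (m : ℝ) (z : Fin K → ℝ) : ℝ := ∑ i, z i ^ m

/-- The generator applied to the power sum `φ_m`:
`B_K φ_m(z) = (m(m-1)/2) ∑ z_i^{m-1}(1-z_i) + m ∑ b_i(z) z_i^{m-1}`. -/
noncomputable def BKphi (K : ℕ) (α θ : ℝ) (m : ℝ) (z : Fin K → ℝ) : ℝ :=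
  (m * (m - 1) / 2) * ∑ i, z i ^ (m - 1) * (1 - z i)
    + m * ∑ i, bdrift K α θ z i * z i ^ (m - 1)

/-!
`B_K φ_m` is bounded uniformly in `K` because every drift coefficient `b_i` is. For `m ≥ 2` the
weights `z_i^{m-1}` have total mass at most `∑ z_i = 1`, and on `[0,1]` both `z_i` and `u r(u)`
lie in `[0,1]`, so `∑_j z_j r_j ≤ K`. The only term that could grow with `K` is
`p_i(z) ∑_j z_j r_j ≤ K / ∑_l (1 - z_l)^K`, and Jensen's inequality for the `K`-th power gives
`∑_l (1 - z_l)^K ≥ K (1 - 1/K)^K`, whence `p_i(z) ∑_j z_j r_j ≤ (1 + 1/(K-1))^K ≤ 2e`.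
-/

open Real

lemma DeltaK.le_one {K : ℕ} {z : Fin K → ℝ} (hz : z ∈ DeltaK K) (i : Fin K) : z i ≤ 1 :=
  hz.2 ▸ single_le_sum (fun j _ => hz.1 j) (mem_univ i)

lemma DeltaK.sum_rpow_le_one {K : ℕ} {z : Fin K → ℝ} (hz : z ∈ DeltaK K) {q : ℝ} (hq : 1 ≤ q) :
    ∑ i, z i ^ q ≤ 1 :=
  hz.2 ▸ sum_le_sum fun i _ => rpow_le_self_of_le_one (hz.1 i) (DeltaK.le_one hz i) hq

lemma mul_rfun_eq (K : ℕ) (u : ℝ) : u * rfun K u = (1 - u) * (1 - (1 - u) ^ K) := by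
  rcases eq_or_ne u 0 with rfl | hu
  · simp [rfun]
  · rw [rfun, if_neg hu, mul_div_cancel₀ _ hu]

lemma mul_rfun_mem_Icc (K : ℕ) {u : ℝ} (h0 : 0 ≤ u) (h1 : u ≤ 1) :
    u * rfun K u ∈ Set.Icc 0 1 := by
  have hpow0 : 0 ≤ (1 - u) ^ K := pow_nonneg (by linarith) K
  have hpow1 : (1 - u) ^ K ≤ 1 := pow_le_one₀ (by linarith) (by linarith)
  rw [mul_rfun_eq]
  constructor <;> nlinarith

lemma DeltaK.sum_mul_rfun_mem_Icc {K : ℕ} {z : Fin K → ℝ} (hz : z ∈ DeltaK K) :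
    ∑ j, z j * rfun K (z j) ∈ Set.Icc 0 (K : ℝ) := by
  have h := fun j => mul_rfun_mem_Icc K (hz.1 j) (DeltaK.le_one hz j)
  refine ⟨sum_nonneg fun j _ => (h j).1, ?_⟩
  simpa using sum_le_sum fun j (_ : j ∈ univ) => (h j).2

lemma DeltaK.pow_div_le_sum_one_sub_pow {n : ℕ} {z : Fin (n + 1) → ℝ}
    (hz : z ∈ DeltaK (n + 1)) :
    (n : ℝ) ^ (n + 1) / ((n : ℝ) + 1) ^ n ≤ ∑ l, (1 - z l) ^ (n + 1) := by
  have hsum : ∑ l, (1 - z l) = n := by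
    simp [sum_sub_distrib, hz.2]
  simpa [hsum] using pow_sum_div_card_le_sum_pow (s := univ)
    (fun l _ => sub_nonneg.2 (DeltaK.le_one hz l)) n

lemma DeltaK.pfun_mem_Icc {K : ℕ} {z : Fin K → ℝ} (hz : z ∈ DeltaK K) (i : Fin K) :
    pfun K z i ∈ Set.Icc 0 (1 / ∑ l, (1 - z l) ^ K) := by
  have h0 : 0 ≤ 1 - z i := sub_nonneg.2 (DeltaK.le_one hz i)
  have hS : 0 ≤ ∑ l, (1 - z l) ^ K :=
    sum_nonneg fun l _ => pow_nonneg (sub_nonneg.2 (DeltaK.le_one hz l)) K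
  exact ⟨div_nonneg (pow_nonneg h0 K) hS,
    div_le_div_of_nonneg_right (pow_le_one₀ h0 (by linarith [hz.1 i])) hS⟩

lemma one_add_inv_pow_succ_le {n : ℕ} (hn : 1 ≤ n) :
    (1 + (n : ℝ)⁻¹) ^ (n + 1) ≤ 2 * exp 1 := by
  have hinv : (n : ℝ)⁻¹ ≤ 1 := inv_le_one_of_one_le₀ (by exact_mod_cast hn)
  rw [pow_succ, mul_comm]
  gcongr
  · linarith
  · exact one_add_inv_pow_le_exp

lemma DeltaK.pfun_mul_sum_mul_rfun_mem_Icc {K : ℕ} (hK : 2 ≤ K) {z : Fin K → ℝ}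
    (hz : z ∈ DeltaK K) (i : Fin K) :
    pfun K z i * ∑ j, z j * rfun K (z j) ∈ Set.Icc 0 (2 * exp 1) := by
  obtain ⟨n, rfl⟩ : ∃ n, K = n + 1 := ⟨K - 1, by omega⟩
  have hn : 1 ≤ n := by omega
  have hn0 : (0 : ℝ) < n := by exact_mod_cast hn
  set S := ∑ l, (1 - z l) ^ (n + 1)
  have hSlb := DeltaK.pow_div_le_sum_one_sub_pow hz
  have hS : 0 < S := lt_of_lt_of_le (by positivity) hSlb
  obtain ⟨hp0, hp1⟩ := DeltaK.pfun_mem_Icc hz i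
  obtain ⟨hT0, hT1⟩ := DeltaK.sum_mul_rfun_mem_Icc hz
  refine ⟨mul_nonneg hp0 hT0, ?_⟩
  have hKS : ((n + 1 : ℕ) : ℝ) / S ≤ (1 + (n : ℝ)⁻¹) ^ (n + 1) := by
    rw [div_le_iff₀ hS]
    calc ((n + 1 : ℕ) : ℝ)
        = (1 + (n : ℝ)⁻¹) ^ (n + 1) * ((n : ℝ) ^ (n + 1) / ((n : ℝ) + 1) ^ n) := by
          rw [inv_eq_one_div, one_add_div hn0.ne', div_pow]
          field_simp
          push_cast
          ring
      _ ≤ (1 + (n : ℝ)⁻¹) ^ (n + 1) * S := by gcongr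
  calc pfun (n + 1) z i * ∑ j, z j * rfun (n + 1) (z j) ≤ 1 / S * ((n + 1 : ℕ) : ℝ) :=
        mul_le_mul hp1 hT1 hT0 (by positivity)
    _ ≤ 2 * exp 1 := by
        rw [one_div_mul_eq_div]
        exact hKS.trans (one_add_inv_pow_succ_le hn)

noncomputable def driftBound (α θ : ℝ) : ℝ := (2 * |θ + α| + |α| * (2 * exp 1 + 1)) / 2

lemma abs_bdrift_le {K : ℕ} (hK : 2 ≤ K) (α θ : ℝ) {z : Fin K → ℝ} (hz : z ∈ DeltaK K)
    (i : Fin K) : |bdrift K α θ z i| ≤ driftBound α θ := by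
  have hz0 := hz.1 i
  have hz1 := DeltaK.le_one hz i
  have hK1 : (1 : ℝ) ≤ K - 1 := by
    have : (2 : ℝ) ≤ K := by exact_mod_cast hK
    linarith
  have hq : |(1 - z i) / ((K : ℝ) - 1)| ≤ 1 := by
    rw [abs_of_nonneg (div_nonneg (by linarith) (by linarith))]
    exact div_le_one_of_le₀ (by linarith) (by linarith)
  have hpT := DeltaK.pfun_mul_sum_mul_rfun_mem_Icc hK hz i
  have hzr := mul_rfun_mem_Icc K hz0 hz1
  have h1 : |(θ + α) * (1 - z i) / ((K : ℝ) - 1)| ≤ |θ + α| := by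
    rw [mul_div_assoc, abs_mul]
    exact mul_le_of_le_one_right (abs_nonneg _) hq
  have h2 : |(θ + α) * z i| ≤ |θ + α| := by
    rw [abs_mul, abs_of_nonneg hz0]
    exact mul_le_of_le_one_right (abs_nonneg _) hz1
  have h3 : |α * pfun K z i * ∑ j, z j * rfun K (z j)| ≤ |α| * (2 * exp 1) := by
    rw [mul_assoc, abs_mul, abs_of_nonneg hpT.1]
    exact mul_le_mul_of_nonneg_left hpT.2 (abs_nonneg α)
  have h4 : |α * z i * rfun K (z i)| ≤ |α| := by
    rw [mul_assoc, abs_mul, abs_of_nonneg hzr.1]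
    exact mul_le_of_le_one_right (abs_nonneg α) hzr.2
  rw [bdrift, driftBound, abs_le]
  have := abs_le.1 h1
  have := abs_le.1 h2
  have := abs_le.1 h3
  have := abs_le.1 h4
  constructor <;> linarith

lemma abs_BKphi_le {m : ℝ} (hm : 2 ≤ m) (α θ : ℝ) {K : ℕ} (hK : 2 ≤ K) {z : Fin K → ℝ}
    (hz : z ∈ DeltaK K) :
    |BKphi K α θ m z| ≤ m * (m - 1) / 2 + m * driftBound α θ := by
  have hw0 : ∀ i, 0 ≤ z i ^ (m - 1) := fun i => rpow_nonneg (hz.1 i) _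
  have hw : ∑ i, z i ^ (m - 1) ≤ 1 := DeltaK.sum_rpow_le_one hz (by linarith)
  have hdiff : |∑ i, z i ^ (m - 1) * (1 - z i)| ≤ 1 := by
    rw [abs_of_nonneg (sum_nonneg fun i _ =>
      mul_nonneg (hw0 i) (sub_nonneg.2 (DeltaK.le_one hz i)))]
    exact (sum_le_sum fun i _ => mul_le_of_le_one_right (hw0 i) (by linarith [hz.1 i])).trans hw
  have hdrift : |∑ i, bdrift K α θ z i * z i ^ (m - 1)| ≤ driftBound α θ := calc
    _ ≤ ∑ i, |bdrift K α θ z i| * z i ^ (m - 1) := by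
        refine (abs_sum_le_sum_abs _ _).trans_eq (sum_congr rfl fun i _ => ?_)
        rw [abs_mul, abs_of_nonneg (hw0 i)]
    _ ≤ ∑ i, driftBound α θ * z i ^ (m - 1) :=
        sum_le_sum fun i _ => mul_le_mul_of_nonneg_right (abs_bdrift_le hK α θ hz i) (hw0 i)
    _ = driftBound α θ * ∑ i, z i ^ (m - 1) := (mul_sum _ _ _).symm
    _ ≤ driftBound α θ := mul_le_of_le_one_right (by unfold driftBound; positivity) hw
  have hm0 : 0 ≤ m := by linarith
  have hc : 0 ≤ m * (m - 1) / 2 := by nlinarith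
  rw [BKphi]
  calc _ ≤ |m * (m - 1) / 2| * |∑ i, z i ^ (m - 1) * (1 - z i)|
        + |m| * |∑ i, bdrift K α θ z i * z i ^ (m - 1)| := by
        rw [← abs_mul, ← abs_mul]
        exact abs_add_le _ _
    _ ≤ m * (m - 1) / 2 + m * driftBound α θ := by
        rw [abs_of_nonneg hc, abs_of_nonneg hm0]
        exact add_le_add (mul_le_of_le_one_right hc hdiff) (mul_le_mul_of_nonneg_left hdrift hm0)

theorem stmt12_general (m : ℝ) (hm : 2 ≤ m) (α θ : ℝ) :
    ∃ C : ℝ, ∀ K : ℕ, 2 ≤ K → ∀ z ∈ NablaK K, |BKphi K α θ m z| ≤ C :=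
  ⟨_, fun _ hK _ hz => abs_BKphi_le hm α θ hK hz.1⟩

/-- For every real `m ≥ 2` and all parameters `0 ≤ α < 1`, `θ > −α`,
there is a constant `C = C(α,θ,m)` such that for every `K ≥ 2` and every `z ∈ ∇_K`,
`|B_K φ_m(z)| ≤ C`. -/
theorem stmt12 (m : ℝ) (hm : 2 ≤ m) (α θ : ℝ) (hα0 : 0 ≤ α) (hα1 : α < 1)
    (hθ : -α < θ) :
    ∃ C : ℝ, ∀ K : ℕ, 2 ≤ K → ∀ z ∈ NablaK K, |BKphi K α θ m z| ≤ C :=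
  stmt12_general m hm α θ
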